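/- arXiv:1906.02187 — 3 statements merged into one kernel-verified Lean document; each statement's English description precedes it below -/
import Mathlib

section
/- Let J : ℝ³ → ℂ³ be essentially bounded with compact support and let h ∈ ℝ³ be fixed, with J_h(y) := J(y + h). Then for every wavenumber k > 0 and every unit vector x̂ ∈ ℝ³ the phaseless far field data is translation invariant: ‖E^∞(x̂, k; J_h)‖ = ‖E^∞(x̂, k; J)‖, where ‖·‖ denotes the Euclidean norm on ℂ³. -/
open MeasureTheory Complex

noncomputable section

abbrev R3 := EuclideanSpace ℝ (Fin 3)
abbrev C3 := EuclideanSpace ℂ (Fin 3)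

/-- The complex component of a ℂ³-vector in a real direction `e`. -/
def dotC (e : R3) (w : C3) : ℂ := ∑ i, (e i : ℂ) * w i

/-- The complexification of a real vector. -/
def cplx (x : R3) : C3 := (WithLp.equiv 2 (Fin 3 → ℂ)).symm fun i => (x i : ℂ)

/-- The electric far field pattern `E^∞(x̂, k; J) = iωμ (v − (x̂·v) x̂)`,
where `ω = k/√(εμ)` and `v = ∫ exp(−ik x̂·y) J(y) dy`. -/
def farField (ε μ k : ℝ) (J : R3 → C3) (x : R3) : C3 :=
  (Complex.I * ((k / Real.sqrt (ε * μ) : ℝ) : ℂ) * (μ : ℂ)) •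
    ((∫ y, Complex.exp (-Complex.I * (k : ℂ) * ((inner ℝ x y : ℝ) : ℂ)) • J y) -
      (dotC x (∫ y, Complex.exp (-Complex.I * (k : ℂ) * ((inner ℝ x y : ℝ) : ℂ)) • J y)) • cplx x)

/- By translation invariance of Lebesgue measure, shifting the source by `h` multiplies the
Fourier-type integral `v` by the unimodular phase `exp(ik x̂·h)`; the far field is `ℂ`-linear
in `v`, so it picks up the same phase, which the norm does not see. -/

lemma dotC_smul (e : R3) (c : ℂ) (w : C3) : dotC e (c • w) = c * dotC e w := by
  simp only [dotC, PiLp.smul_apply, smul_eq_mul, Finset.mul_sum]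
  exact Finset.sum_congr rfl fun _ _ => by ring

lemma exp_neg_inner_eq_mul_exp_neg_inner_add {E : Type*} [NormedAddCommGroup E]
    [InnerProductSpace ℝ E] (k : ℝ) (x y h : E) :
    exp (-I * k * (inner ℝ x y : ℝ)) =
      exp (I * k * (inner ℝ x h : ℝ)) * exp (-I * k * (inner ℝ x (y + h) : ℝ)) := by
  rw [← Complex.exp_add, inner_add_right]
  push_cast
  ring_nf

lemma integral_exp_neg_inner_smul_comp_add {E F : Type*} [NormedAddCommGroup E]
    [InnerProductSpace ℝ E] [MeasurableSpace E] [MeasurableAdd E] [NormedAddCommGroup F]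
    [NormedSpace ℂ F] (μ : Measure E) [μ.IsAddRightInvariant] (k : ℝ) (x h : E) (f : E → F) :
    ∫ y, exp (-I * k * (inner ℝ x y : ℝ)) • f (y + h) ∂μ =
      exp (I * k * (inner ℝ x h : ℝ)) • ∫ y, exp (-I * k * (inner ℝ x y : ℝ)) • f y ∂μ := by
  calc ∫ y, exp (-I * k * (inner ℝ x y : ℝ)) • f (y + h) ∂μ
      = ∫ y, exp (I * k * (inner ℝ x h : ℝ)) •
          (exp (-I * k * (inner ℝ x (y + h) : ℝ)) • f (y + h)) ∂μ := by
        congr 1 with y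
        rw [exp_neg_inner_eq_mul_exp_neg_inner_add k x y h, mul_smul]
    _ = exp (I * k * (inner ℝ x h : ℝ)) • ∫ y, exp (-I * k * (inner ℝ x y : ℝ)) • f y ∂μ := by
        rw [integral_smul,
          integral_add_right_eq_self (fun y => exp (-I * k * (inner ℝ x y : ℝ)) • f y) h]

lemma farField_comp_add (ε μ k : ℝ) (J : R3 → C3) (h x : R3) :
    farField ε μ k (fun y => J (y + h)) x =
      exp (I * k * (inner ℝ x h : ℝ)) • farField ε μ k J x := by
  rw [farField, farField, integral_exp_neg_inner_smul_comp_add, dotC_smul,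
    mul_smul (exp _) _ (cplx x), ← smul_sub, smul_comm]

theorem phaseless_translation_invariance_general (ε μ : ℝ) (J : R3 → C3) (h : R3) (k : ℝ) (xhat : R3) :
    ‖farField ε μ k (fun y => J (y + h)) xhat‖ = ‖farField ε μ k J xhat‖ := by
  rw [farField_comp_add, norm_smul, mul_assoc, ← ofReal_mul, norm_exp_I_mul_ofReal, one_mul]

/-- The phaseless far field data is invariant under translation of the source. -/
theorem phaseless_translation_invariance (ε μ : ℝ) (hε : 0 < ε) (hμ : 0 < μ)
    (J : R3 → C3) (hJb : MemLp J ⊤ volume) (hJc : HasCompactSupport J)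
    (h : R3) (k : ℝ) (hk : 0 < k) (xhat : R3) (hxh : ‖xhat‖ = 1) :
    ‖farField ε μ k (fun y => J (y + h)) xhat‖ = ‖farField ε μ k J xhat‖ :=
  phaseless_translation_invariance_general ε μ J h k xhat

end
end

section
/- Let J : ℝ³ → ℂ³ be essentially bounded with compact support, let (x̂₀, l, m) be an orthonormal basis of ℝ³, and let e ∈ {l, m}. Then for every k > 0, e · E^∞(x̂₀, k; J) = iωμ ∫_ℝ exp(i k α) Ĵ_e(α) dα, where Ĵ_e(α) := ∫_{ℝ²} e · J(−α x̂₀ + s l + t m) ds dt. -/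
/-
Since `e ⊥ x̂₀`, the `x̂₀`-term of the far field has no `e`-component, so `e · E^∞` is `iωμ`
times `∫ exp(−ik x̂₀·y) e·J(y) dy`. The coordinates `y = α(−x̂₀) + s l + t m` preserve Lebesgue
measure and turn the phase into `exp(ikα)`; Fubini then splits the integral into the
`α`-integral of the hyperplane integrals `Ĵ_e(α)`.
-/
open MeasureTheory Complex

noncomputable section

/-- `Ĵ_e(α)`: the integral of `e·J` over the hyperplane `{y : y·x̂₀ + α = 0}`,
parametrized as `y = −α x̂₀ + s l + t m`. -/
def sliceProj (J : R3 → C3) (xhat l m e : R3) (α : ℝ) : ℂ :=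
  ∫ st : ℝ × ℝ, dotC e (J (-α • xhat + st.1 • l + st.2 • m))

def OrthonormalBasis.ofCardEqFinrank {ι E : Type*} [Fintype ι] [Nonempty ι] [NormedAddCommGroup E]
    [InnerProductSpace ℝ E] {v : ι → E} (hv : Orthonormal ℝ v)
    (card_eq : Fintype.card ι = Module.finrank ℝ E) : OrthonormalBasis ι ℝ E :=
  (basisOfOrthonormalOfCardEqFinrank hv card_eq).toOrthonormalBasis
    (by rwa [coe_basisOfOrthonormalOfCardEqFinrank])

@[simp]
theorem OrthonormalBasis.coe_ofCardEqFinrank {ι E : Type*} [Fintype ι] [Nonempty ι]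
    [NormedAddCommGroup E] [InnerProductSpace ℝ E] {v : ι → E} (hv : Orthonormal ℝ v)
    (card_eq : Fintype.card ι = Module.finrank ℝ E) : ⇑(ofCardEqFinrank hv card_eq) = v := by
  simp [ofCardEqFinrank]

section OrthonormalCoords

variable {E : Type*} [NormedAddCommGroup E] [InnerProductSpace ℝ E] [MeasurableSpace E]
  [BorelSpace E] {u v w : E}

def orthonormalCoords (huvw : Orthonormal ℝ ![u, v, w]) (hE : Module.finrank ℝ E = 3) :
    (ℝ × ℝ × ℝ) ≃ᵐ E :=
  ((MeasurableEquiv.refl ℝ).prodCongr MeasurableEquiv.finTwoArrow.symm).trans <|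
    (MeasurableEquiv.piFinSuccAbove (fun _ : Fin 3 ↦ ℝ) 0).symm.trans <|
      (MeasurableEquiv.toLp 2 (Fin 3 → ℝ)).trans
        (OrthonormalBasis.ofCardEqFinrank huvw (by simp [hE])).measurableEquiv.symm

theorem orthonormalCoords_apply (huvw : Orthonormal ℝ ![u, v, w]) (hE : Module.finrank ℝ E = 3)
    (p : ℝ × ℝ × ℝ) :
    orthonormalCoords huvw hE p = p.1 • u + p.2.1 • v + p.2.2 • w := by
  simp [orthonormalCoords, OrthonormalBasis.measurableEquiv, ← OrthonormalBasis.sum_repr_symm,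
    Fin.sum_univ_three, MeasurableEquiv.piFinSuccAbove, MeasurableEquiv.finTwoArrow,
    MeasurableEquiv.piFinTwo, piFinTwoEquiv, MeasurableEquiv.prodCongr, add_assoc]

theorem measurePreserving_orthonormalCoords [FiniteDimensional ℝ E]
    (huvw : Orthonormal ℝ ![u, v, w]) (hE : Module.finrank ℝ E = 3) :
    MeasurePreserving (orthonormalCoords huvw hE) volume volume :=
  (((OrthonormalBasis.ofCardEqFinrank huvw (by simp [hE])).measurePreserving_measurableEquiv.symm
      _).comp
    (((EuclideanSpace.volume_preserving_symm_measurableEquiv_toLp (Fin 3)).symm _).comp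
      ((volume_preserving_piFinSuccAbove (fun _ : Fin 3 ↦ ℝ) 0).symm _))).comp
    ((MeasurePreserving.id volume).prod ((measurePreserving_finTwoArrow volume).symm _))

theorem integral_eq_integral_integral_orthonormalCoords [FiniteDimensional ℝ E] {F : Type*}
    [NormedAddCommGroup F] [NormedSpace ℝ F] (huvw : Orthonormal ℝ ![u, v, w])
    (hE : Module.finrank ℝ E = 3) {f : E → F} (hf : Integrable f) :
    ∫ y, f y = ∫ α : ℝ, ∫ st : ℝ × ℝ, f (α • u + st.1 • v + st.2 • w) := by
  have hΨ := measurePreserving_orthonormalCoords huvw hE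
  have hfΨ : Integrable (fun p ↦ f (orthonormalCoords huvw hE p)) (volume.prod volume) :=
    hΨ.integrable_comp_emb (orthonormalCoords huvw hE).measurableEmbedding |>.mpr hf
  rw [← hΨ.integral_comp' f, Measure.volume_eq_prod, integral_prod _ hfΨ]
  simp [orthonormalCoords_apply]

end OrthonormalCoords

theorem MeasureTheory.MemLp.integrable_of_hasCompactSupport {X F : Type*} [TopologicalSpace X]
    [MeasurableSpace X] {μ : Measure X} [IsFiniteMeasureOnCompacts μ] [NormedAddCommGroup F]
    {f : X → F} (hf : MemLp f ⊤ μ) (hfc : HasCompactSupport f) : Integrable f μ :=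
  memLp_one_iff_integrable.mp <| hf.mono_exponent_of_measure_support_ne_top
    (fun _ ↦ image_eq_zero_of_notMem_tsupport) hfc.measure_lt_top.ne le_top

theorem MeasureTheory.Integrable.exp_neg_I_mul_inner_smul {E F : Type*} [NormedAddCommGroup E]
    [InnerProductSpace ℝ E] [MeasurableSpace E] [OpensMeasurableSpace E] {μ : Measure E}
    [NormedAddCommGroup F] [NormedSpace ℂ F] {f : E → F} (hf : Integrable f μ) (k : ℝ) (x : E) :
    Integrable (fun y ↦ exp (-I * k * (inner ℝ x y : ℝ)) • f y) μ :=
  hf.bdd_smul (φ := fun y ↦ exp (-I * k * (inner ℝ x y : ℝ))) 1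
    (Continuous.aestronglyMeasurable (by fun_prop)) (.of_forall fun y ↦ by simp [norm_exp])

theorem dotC_eq_inner (e : R3) (w : C3) : dotC e w = inner ℂ (cplx e) w := by
  simp [dotC, cplx, PiLp.inner_apply, mul_comm]

theorem inner_cplx_cplx (e x : R3) : inner ℂ (cplx e) (cplx x) = ((inner ℝ e x : ℝ) : ℂ) := by
  simp [cplx, PiLp.inner_apply, mul_comm]

theorem dotC_farField {ε μ k : ℝ} {J : R3 → C3} {e x : R3} (hJ : Integrable J)
    (hex : inner ℝ e x = 0) :
    dotC e (farField ε μ k J x) = I * ((k / √(ε * μ) : ℝ) : ℂ) * μ *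
      ∫ y, exp (-I * k * (inner ℝ x y : ℝ)) * dotC e (J y) := by
  simp only [farField, dotC_eq_inner, inner_smul_right, inner_sub_right, inner_cplx_cplx, hex,
    ← integral_inner (hJ.exp_neg_I_mul_inner_smul k x)]
  simp

theorem farField_component_eq_fourier_general (ε μ : ℝ)
    (J : R3 → C3) (hJb : MemLp J ⊤ volume) (hJc : HasCompactSupport J)
    (xhat l m : R3) (hxh : ‖xhat‖ = 1) (hl : ‖l‖ = 1) (hm : ‖m‖ = 1)
    (hxl : (inner ℝ xhat l : ℝ) = 0) (hxm : (inner ℝ xhat m : ℝ) = 0)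
    (hlm : (inner ℝ l m : ℝ) = 0)
    (e : R3) (he : e = l ∨ e = m) (k : ℝ) :
    dotC e (farField ε μ k J xhat) =
      Complex.I * ((k / Real.sqrt (ε * μ) : ℝ) : ℂ) * (μ : ℂ) *
        ∫ α : ℝ, Complex.exp (Complex.I * (k : ℂ) * (α : ℂ)) * sliceProj J xhat l m e α := by
  have hJ : Integrable J := hJb.integrable_of_hasCompactSupport hJc
  have hex : inner ℝ e xhat = 0 := by
    rcases he with rfl | rfl <;> rwa [real_inner_comm]
  have hon : Orthonormal ℝ ![-xhat, l, m] := by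
    simp [Fin.forall_fin_two, hxh, hl, hm, hxl, hxm, hlm]
  have hG : Integrable (fun y ↦ exp (-I * k * (inner ℝ xhat y : ℝ)) * dotC e (J y)) := by
    simpa [dotC_eq_inner, inner_smul_right] using
      (hJ.exp_neg_I_mul_inner_smul k xhat).const_inner (𝕜 := ℂ) (cplx e)
  rw [dotC_farField hJ hex,
    integral_eq_integral_integral_orthonormalCoords hon finrank_euclideanSpace_fin hG]
  congr 2 with α
  rw [sliceProj, ← integral_const_mul]
  congr 1 with st
  have hphase : inner ℝ xhat (-α • xhat + st.1 • l + st.2 • m) = -α := by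
    simp [inner_add_right, inner_smul_right, hxl, hxm, hxh]
  rw [smul_neg, ← neg_smul, hphase]
  congr 2
  push_cast
  ring

/-- The far field component in a tangential direction `e` is `iωμ` times the
one-dimensional inverse Fourier transform of the slice projections `Ĵ_e`. -/
theorem farField_component_eq_fourier (ε μ : ℝ) (hε : 0 < ε) (hμ : 0 < μ)
    (J : R3 → C3) (hJb : MemLp J ⊤ volume) (hJc : HasCompactSupport J)
    (xhat l m : R3) (hxh : ‖xhat‖ = 1) (hl : ‖l‖ = 1) (hm : ‖m‖ = 1)
    (hxl : (inner ℝ xhat l : ℝ) = 0) (hxm : (inner ℝ xhat m : ℝ) = 0)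
    (hlm : (inner ℝ l m : ℝ) = 0)
    (e : R3) (he : e = l ∨ e = m) (k : ℝ) (hk : 0 < k) :
    dotC e (farField ε μ k J xhat) =
      Complex.I * ((k / Real.sqrt (ε * μ) : ℝ) : ℂ) * (μ : ℂ) *
        ∫ α : ℝ, Complex.exp (Complex.I * (k : ℂ) * (α : ℂ)) * sliceProj J xhat l m e α :=
  farField_component_eq_fourier_general ε μ J hJb hJc xhat l m hxh hl hm hxl hxm hlm e he k

end
end

section
/- Let z₁, z₂, z₃ ∈ ℂ be three pairwise distinct complex numbers that are not collinear, and let R > 0. Then there exists a constant c > 0, depending only on z₁, z₂, z₃ and R, such that for every ε > 0 and all z, zᵉ ∈ ℂ with |z| ≤ R, |zᵉ| ≤ R and | |zᵉ − z_j| − |z − z_j| | ≤ ε for j = 1, 2, 3, one has |zᵉ − z| ≤ c ε. That is, the reconstruction of a point from its distances to three non-collinear points is Lipschitz stable on bounded sets. -/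
/-!
Subtracting ‖ze - p‖² - ‖z - p‖² from ‖ze - q‖² - ‖z - q‖² cancels the quadratic terms and
leaves 2⟪ze - z, p - q⟫, while on the ball of radius R each of these differences of squares is
O(ε). Hence ze - z has inner products of size O(ε) with z₂ - z₁ and z₃ - z₁. These two vectors
span the plane, so w ↦ (⟪z₂ - z₁, w⟫, ⟪z₃ - z₁, w⟫) is an injective linear map on a
finite-dimensional space, hence antilipschitz, which gives ‖ze - z‖ = O(ε).
-/

open Set Submodule
open scoped InnerProductSpace

theorem abs_sq_norm_sub_sub_sq_norm_sub_le {E : Type*} [SeminormedAddCommGroup E] {x y p : E}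
    {R ε : ℝ} (hx : ‖x‖ ≤ R) (hy : ‖y‖ ≤ R) (h : |‖x - p‖ - ‖y - p‖| ≤ ε) :
    |‖x - p‖ ^ 2 - ‖y - p‖ ^ 2| ≤ 2 * (R + ‖p‖) * ε := by
  have hsum : ‖x - p‖ + ‖y - p‖ ≤ 2 * (R + ‖p‖) := by
    linarith [norm_sub_le x p, norm_sub_le y p]
  rw [sq_sub_sq, abs_mul, abs_of_nonneg (by positivity)]
  exact mul_le_mul hsum h (abs_nonneg _) (by linarith [norm_nonneg (x - p), norm_nonneg (y - p)])

section InnerProductSpace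

variable {E : Type*} [NormedAddCommGroup E] [InnerProductSpace ℝ E]

theorem sq_norm_sub_sub_sq_norm_sub_sub_eq_inner (x y p q : E) :
    (‖x - p‖ ^ 2 - ‖y - p‖ ^ 2) - (‖x - q‖ ^ 2 - ‖y - q‖ ^ 2) = 2 * ⟪x - y, q - p⟫_ℝ := by
  simp only [norm_sub_sq_real, inner_sub_left, inner_sub_right]
  ring

theorem exists_norm_le_mul_of_abs_inner_le {ι : Type*} [Fintype ι] [FiniteDimensional ℝ E]
    {v : ι → E} (hv : span ℝ (range v) = ⊤) :
    ∃ C > 0, ∀ (w : E) (δ : ℝ), 0 ≤ δ → (∀ i, |⟪v i, w⟫_ℝ| ≤ δ) → ‖w‖ ≤ C * δ := by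
  let f : E →ₗ[ℝ] ι → ℝ := LinearMap.pi fun i ↦ innerₛₗ ℝ (v i)
  have hf : LinearMap.ker f = ⊥ := by
    refine (Submodule.eq_bot_iff _).mpr fun w hw ↦ ?_
    have hw_perp : w ∈ (ℝ ∙ w)ᗮ := by
      refine (top_le_iff.mpr hv).trans (span_le.mpr ?_) mem_top
      rintro _ ⟨i, rfl⟩
      exact mem_orthogonal_singleton_iff_inner_left.mpr (congrFun hw i)
    exact inner_self_eq_zero.mp (mem_orthogonal_singleton_iff_inner_right.mp hw_perp)
  obtain ⟨K, hK, hfK⟩ := f.exists_antilipschitzWith hf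
  refine ⟨K, hK, fun w δ hδ hw ↦ ?_⟩
  calc ‖w‖ ≤ K * ‖f w‖ := hfK.le_mul_norm (map_zero f) w
    _ ≤ K * δ := by
      gcongr
      exact (pi_norm_le_iff_of_nonneg hδ).mpr fun i ↦ by simpa only [f, LinearMap.pi_apply, innerₛₗ_apply_apply, Real.norm_eq_abs] using hw i

theorem abs_inner_sub_sub_le_of_abs_norm_sub_sub_le {x y p q : E} {R ε : ℝ} (hx : ‖x‖ ≤ R)
    (hy : ‖y‖ ≤ R) (hp : |‖x - p‖ - ‖y - p‖| ≤ ε) (hq : |‖x - q‖ - ‖y - q‖| ≤ ε) :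
    |⟪q - p, x - y⟫_ℝ| ≤ (2 * R + ‖p‖ + ‖q‖) * ε := by
  have hpq := sq_norm_sub_sub_sq_norm_sub_sub_eq_inner x y p q
  obtain ⟨hp₁, hp₂⟩ := abs_le.mp (abs_sq_norm_sub_sub_sq_norm_sub_le hx hy hp)
  obtain ⟨hq₁, hq₂⟩ := abs_le.mp (abs_sq_norm_sub_sub_sq_norm_sub_le hx hy hq)
  rw [real_inner_comm, abs_le]
  constructor <;> linarith

end InnerProductSpace

theorem point_stability_from_three_distances_general (z₁ z₂ z₃ : ℂ)
    (hind : LinearIndependent ℝ ![z₂ - z₁, z₃ - z₁])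
    (R : ℝ) (hR : 0 < R) :
    ∃ c : ℝ, 0 < c ∧ ∀ ε : ℝ, 0 < ε → ∀ z ze : ℂ,
      ‖z‖ ≤ R → ‖ze‖ ≤ R →
      |‖ze - z₁‖ - ‖z - z₁‖| ≤ ε →
      |‖ze - z₂‖ - ‖z - z₂‖| ≤ ε →
      |‖ze - z₃‖ - ‖z - z₃‖| ≤ ε →
      ‖ze - z‖ ≤ c * ε := by
  obtain ⟨C, hC, hC_bound⟩ := exists_norm_le_mul_of_abs_inner_le
    (hind.span_eq_top_of_card_eq_finrank' (by simp))
  refine ⟨C * (2 * R + ‖z₁‖ + ‖z₂‖ + ‖z₃‖), by positivity, fun ε hε z ze hz hze h₁ h₂ h₃ ↦ ?_⟩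
  rw [mul_assoc]
  refine hC_bound (ze - z) _ (by positivity) (Fin.forall_fin_two.mpr ⟨?_, ?_⟩)
  · refine (abs_inner_sub_sub_le_of_abs_norm_sub_sub_le hze hz h₁ h₂).trans ?_
    gcongr ?_ * ε
    linarith [norm_nonneg z₃]
  · refine (abs_inner_sub_sub_le_of_abs_norm_sub_sub_le hze hz h₁ h₃).trans ?_
    gcongr ?_ * ε
    linarith [norm_nonneg z₂]

/-- Lipschitz stability on bounded sets of the reconstruction of a point of the plane
from its distances to three pairwise distinct, non-collinear points. -/
theorem point_stability_from_three_distances (z₁ z₂ z₃ : ℂ)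
    (h12 : z₁ ≠ z₂) (h13 : z₁ ≠ z₃) (h23 : z₂ ≠ z₃)
    (hind : LinearIndependent ℝ ![z₂ - z₁, z₃ - z₁])
    (R : ℝ) (hR : 0 < R) :
    ∃ c : ℝ, 0 < c ∧ ∀ ε : ℝ, 0 < ε → ∀ z ze : ℂ,
      ‖z‖ ≤ R → ‖ze‖ ≤ R →
      |‖ze - z₁‖ - ‖z - z₁‖| ≤ ε →
      |‖ze - z₂‖ - ‖z - z₂‖| ≤ ε →
      |‖ze - z₃‖ - ‖z - z₃‖| ≤ ε →
      ‖ze - z‖ ≤ c * ε :=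
  point_stability_from_three_distances_general z₁ z₂ z₃ hind R hR
end
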